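/- Let V be a unital commutative associative ℂ-algebra with a trace str. Let A be a differential operator of order at most k ≥ 3 strongly compatible with the trace and let B be a differential operator of order at most l ≥ 3 strongly compatible with the trace. Then for all f, f_1,…,f_{k+l−2} ∈ V one has str( f · ⟨f_1,…,f_{k+l−2}⟩_{k+l−2}^{[A,B]} · (−) ) = 0, where [A,B] = A∘B − B∘A; in particular the commutator [A,B], which is a differential operator of order at most k+l−1, is strongly compatible with the trace. Thus the differential operators strongly compatible with the trace form a Lie subalgebra of the Lie algebra of differential operators on V. -/

import Mathlib

/-- The Koszul bracket hierarchy of an operator `D` on a commutative algebra: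
`⟨f⟩₁ = D f` and
`⟨f₁,…,f_{l+1}⟩_{l+1} = ⟨f₁,…,f_{l-1},f_l·f_{l+1}⟩_l − ⟨f₁,…,f_l⟩_l·f_{l+1} − f_l·⟨f₁,…,f_{l-1},f_{l+1}⟩_l`. -/
def koszul {V : Type*} [CommRing V] (D : V → V) : (l : ℕ) → (Fin l → V) → V
  | 0, _ => 0
  | 1, f => D (f 0)
  | l + 2, f =>
      koszul D (l + 1)
        (Fin.snoc (fun i : Fin l => f i.castSucc.castSucc)
          (f ⟨l, by omega⟩ * f ⟨l + 1, by omega⟩))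
      - koszul D (l + 1) (fun i => f i.castSucc) * f ⟨l + 1, by omega⟩
      - f ⟨l, by omega⟩ *
          koszul D (l + 1)
            (Fin.snoc (fun i : Fin l => f i.castSucc.castSucc) (f ⟨l + 1, by omega⟩))

/-- `D` is a differential operator of order at most `l` if the `(l+1)`-st Koszul
bracket vanishes identically. -/
def IsDiffOpOfOrderAtMost {V : Type*} [CommRing V] (D : V → V) (l : ℕ) : Prop :=
  ∀ f : Fin (l + 1) → V, koszul D (l + 1) f = 0

/-- A differential operator `A` of order at most `l` (intended `l ≥ 3`) on a
commutative algebra with a trace `str` is strongly compatible with the trace if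
`str(⟨f₁,…,f_{l−1}⟩_{l−1}^A · (−)) = 0` for all `f₁,…,f_{l−1}`. -/
def StronglyCompatibleWithTrace {V : Type*} [CommRing V] [Algebra ℂ V]
    (str : Module.End ℂ V →ₗ[ℂ] ℂ) (A : V → V) (l : ℕ) : Prop :=
  ∀ f : Fin (l - 1) → V, str (LinearMap.mulLeft ℂ (koszul A (l - 1) f)) = 0

set_option linter.unusedSectionVars false
set_option linter.unusedTactic false

namespace KoszulAux

variable {V : Type*} [CommRing V] [Algebra ℂ V]

local notation "μ" => LinearMap.mulLeft ℂ

def psi (D : Module.End ℂ V) : (n : ℕ) → (Fin n → V) → Module.End ℂ V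
  | 0, _ => D
  | n + 1, f =>
      psi D n (fun i => f i.castSucc) * μ (f (Fin.last n))
        - μ (f (Fin.last n)) * psi D n (fun i => f i.castSucc)

lemma psi_succ (D : Module.End ℂ V) (n : ℕ) (f : Fin (n + 1) → V) :
    psi D (n + 1) f =
      psi D n (fun i => f i.castSucc) * μ (f (Fin.last n))
        - μ (f (Fin.last n)) * psi D n (fun i => f i.castSucc) := rfl


lemma mulLeft_add' (x y : V) : μ (x + y) = μ x + μ y := by ext z; simp [add_mul]
lemma mulLeft_neg' (x : V) : μ (-x) = -(μ x) := by ext z; simp [neg_mul]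
lemma mulLeft_zero' : μ (0 : V) = 0 := by ext z; simp

lemma psi_snoc (D : Module.End ℂ V) (n : ℕ) (h : Fin n → V) (x : V) :
    psi D (n + 1) (Fin.snoc h x) = psi D n h * μ x - μ x * psi D n h := by
  rw [psi_succ]; simp [Fin.snoc_castSucc, Fin.snoc_last]


lemma psi_cons (D : Module.End ℂ V) (n : ℕ) (x : V) (f : Fin n → V) :
    psi D (n + 1) (Fin.cons x f) = psi (D * μ x - μ x * D) n f := by
  induction n generalizing D with
  | zero =>
      rw [psi_succ]
      have h0 : (Fin.cons x f : Fin 1 → V) (Fin.last 0) = x := rfl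
      rw [h0]; rfl
  | succ n ih =>
      rw [psi_succ]
      have h1 : (Fin.cons x f : Fin (n + 2) → V) (Fin.last (n + 1)) = f (Fin.last n) := by
        rw [← Fin.succ_last, Fin.cons_succ]
      have h2 : (fun i : Fin (n + 1) => (Fin.cons x f : Fin (n + 2) → V) i.castSucc)
          = Fin.cons x (fun i : Fin n => f i.castSucc) := by
        funext i
        induction i using Fin.cases with
        | zero => rfl
        | succ j => rw [← Fin.succ_castSucc, Fin.cons_succ, Fin.cons_succ]
      rw [h1, h2, ih, psi_succ]

lemma psi_neg (D : Module.End ℂ V) (n : ℕ) (f : Fin n → V) :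
    psi (-D) n f = -psi D n f := by
  induction n generalizing D with
  | zero => rfl
  | succ n ih =>
    rw [psi_succ, psi_succ, ih]
    ext v
    simp only [LinearMap.sub_apply, Module.End.mul_apply, LinearMap.neg_apply, map_neg,
      LinearMap.mulLeft_apply]
    ring

lemma psi_add (D E : Module.End ℂ V) (n : ℕ) (f : Fin n → V) :
    psi (D + E) n f = psi D n f + psi E n f := by
  induction n generalizing D E with
  | zero => rfl
  | succ n ih => rw [psi_succ, psi_succ, psi_succ, ih]; noncomm_ring

lemma psi_apply (D : Module.End ℂ V) (n : ℕ) (h : Fin n → V) (x : V) :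
    psi D n h x = psi D (n + 1) (Fin.snoc h x) 1 + x * psi D n h 1 := by
  rw [psi_snoc]
  simp [LinearMap.sub_apply, Module.End.mul_apply, mul_one]

-- the two-step evaluation identity for psi matching the koszul recursion
lemma psi_two_step (D : Module.End ℂ V) (n : ℕ) (f : Fin (n + 2) → V) :
    psi D (n + 2) f 1 =
      psi D (n + 1)
          (Fin.snoc (fun i : Fin n => f i.castSucc.castSucc)
            (f ⟨n, by omega⟩ * f ⟨n + 1, by omega⟩)) 1
        - psi D (n + 1) (fun i => f i.castSucc) 1 * f ⟨n + 1, by omega⟩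
        - f ⟨n, by omega⟩ *
            psi D (n + 1)
              (Fin.snoc (fun i : Fin n => f i.castSucc.castSucc) (f ⟨n + 1, by omega⟩)) 1 := by
  set P := psi D n (fun i : Fin n => f i.castSucc.castSucc) with hP
  have e1 : psi D (n + 1) (fun i : Fin (n + 1) => f i.castSucc)
      = P * μ (f ⟨n, by omega⟩) - μ (f ⟨n, by omega⟩) * P := by
    rw [psi_succ]; rfl
  have elast : f (Fin.last (n + 1)) = f ⟨n + 1, by omega⟩ := rfl
  rw [psi_succ D (n + 1) f, psi_snoc, psi_snoc, e1, elast]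
  simp only [LinearMap.sub_apply, Module.End.mul_apply, LinearMap.mulLeft_apply, map_sub, map_mul,
    mul_one, map_one]
  ring

lemma koszul_eq_psi (D : Module.End ℂ V) (hD : D 1 = 0) :
    ∀ (n : ℕ) (f : Fin (n + 1) → V), koszul (⇑D) (n + 1) f = psi D (n + 1) f 1 := by
  intro n
  induction n with
  | zero =>
      intro f
      have : koszul (⇑D) 1 f = D (f 0) := rfl
      rw [this, psi_succ]
      have h0 : f (Fin.last 0) = f 0 := rfl
      simp [h0, hD, psi]
  | succ n ih =>
      intro f
      show koszul (⇑D) (n + 2) f = _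
      rw [koszul, ih, ih, ih, psi_two_step]


lemma snoc_const (n : ℕ) (c : V) :
    (Fin.snoc (fun _ : Fin n => c) c : Fin (n + 1) → V) = fun _ => c := by
  funext i
  induction i using Fin.lastCases with
  | last => rw [Fin.snoc_last]
  | cast j => rw [Fin.snoc_castSucc]

lemma koszul_const_one (D : V → V) :
    ∀ n : ℕ, koszul D (n + 1) (fun _ => (1 : V)) = ((-1 : ℤ) ^ n) • D 1 := by
  intro n
  induction n with
  | zero => show D 1 = _ ; simp
  | succ n ih =>
      show koszul D (n + 2) (fun _ => (1 : V)) = _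
      rw [koszul]
      simp only [one_mul, mul_one]
      rw [snoc_const, ih]
      push_cast
      rw [pow_succ]
      push_cast
      simp only [mul_neg, mul_one, neg_smul]
      abel

-- identification lemmas for double snoc
lemma dsnoc_at_last {n : ℕ} (c : Fin n → V) (x y : V) :
    (Fin.snoc (Fin.snoc c x) y : Fin (n + 2) → V) ⟨n + 1, by omega⟩ = y := by
  have : (⟨n + 1, by omega⟩ : Fin (n + 2)) = Fin.last (n + 1) := rfl
  rw [this, Fin.snoc_last]

lemma dsnoc_at_n {n : ℕ} (c : Fin n → V) (x y : V) :
    (Fin.snoc (Fin.snoc c x) y : Fin (n + 2) → V) ⟨n, by omega⟩ = x := by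
  have : (⟨n, by omega⟩ : Fin (n + 2)) = (Fin.last n).castSucc := rfl
  rw [this, Fin.snoc_castSucc, Fin.snoc_last]

lemma dsnoc_init2 {n : ℕ} (c : Fin n → V) (x y : V) :
    (fun i : Fin n => (Fin.snoc (Fin.snoc c x) y : Fin (n + 2) → V) i.castSucc.castSucc)
      = c := by
  funext i; rw [Fin.snoc_castSucc, Fin.snoc_castSucc]

lemma dsnoc_init1 {n : ℕ} (c : Fin n → V) (x y : V) :
    (fun i : Fin (n + 1) => (Fin.snoc (Fin.snoc c x) y : Fin (n + 2) → V) i.castSucc)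
      = Fin.snoc c x := by
  funext i; rw [Fin.snoc_castSucc]

/-- Unfolding of `koszul` at a double-snoc argument. -/
lemma koszul_dsnoc (D : V → V) (n : ℕ) (c : Fin n → V) (x y : V) :
    koszul D (n + 2) (Fin.snoc (Fin.snoc c x) y)
      = koszul D (n + 1) (Fin.snoc c (x * y))
        - koszul D (n + 1) (Fin.snoc c x) * y
        - x * koszul D (n + 1) (Fin.snoc c y) := by
  rw [koszul, dsnoc_at_last, dsnoc_at_n, dsnoc_init2, dsnoc_init1]

lemma koszul_swap_last2 (D : V → V) (n : ℕ) (c : Fin n → V) (x y : V) :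
    koszul D (n + 2) (Fin.snoc (Fin.snoc c x) y)
      = koszul D (n + 2) (Fin.snoc (Fin.snoc c y) x) := by
  rw [koszul_dsnoc, koszul_dsnoc, mul_comm x y]
  ring


/-- An endomorphism commuting with all multiplications is a multiplication. -/
lemma eq_mulLeft_of_comm {T : Module.End ℂ V} (h : ∀ x : V, T * μ x = μ x * T) :
    T = μ (T 1) := by
  ext y
  have := congrArg (fun S : Module.End ℂ V => S 1) (h y)
  simp only [Module.End.mul_apply, LinearMap.mulLeft_apply, mul_one] at this
  simp [LinearMap.mulLeft_apply, this, mul_comm]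

lemma exists_mulLeft {P : Module.End ℂ V}
    (hP : ∀ h : Fin 1 → V, psi P 1 h = 0) : ∃ c : V, P = μ c := by
  refine ⟨P 1, eq_mulLeft_of_comm fun x => ?_⟩
  have := hP (fun _ => x)
  have e : psi P 1 (fun _ => x) = P * μ x - μ x * P := by rw [psi_succ]; rfl
  rw [e] at this
  linear_combination (norm := noncomm_ring) this

lemma psi_ord_hered {P : Module.End ℂ V} {a : ℕ}
    (hP : ∀ h : Fin (a + 1) → V, psi P (a + 1) h = 0) (x : V) :
    ∀ h : Fin a → V, psi (P * μ x - μ x * P) a h = 0 := by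
  intro h
  rw [← psi_cons]
  exact hP _

/-- Order of a commutator: `Ψ_{a+b}([P,Q]) = 0`. -/
lemma psi_comm_zero :
    ∀ (N a b n : ℕ) (P Q : Module.End ℂ V), a + b ≤ N → a + b = n →
      (∀ h : Fin (a + 1) → V, psi P (a + 1) h = 0) →
      (∀ h : Fin (b + 1) → V, psi Q (b + 1) h = 0) →
      ∀ g : Fin n → V, psi (P * Q - Q * P) n g = 0 := by
  intro N
  induction N with
  | zero =>
      intro a b n P Q hab hn hP hQ g
      obtain ⟨rfl, rfl⟩ : a = 0 ∧ b = 0 := by omega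
      obtain rfl : n = 0 := by omega
      obtain ⟨c, hPc⟩ := exists_mulLeft hP
      have e : P * Q - Q * P = -(Q * μ c - μ c * Q) := by rw [hPc]; noncomm_ring
      rw [e, psi_neg, ← psi_cons, hQ _, neg_zero]
  | succ N ih =>
      intro a b n P Q hab hn hP hQ g
      rcases Nat.eq_zero_or_pos a with rfl | ha
      · obtain rfl : n = b := by omega
        obtain ⟨c, hPc⟩ := exists_mulLeft hP
        have e : P * Q - Q * P = -(Q * μ c - μ c * Q) := by rw [hPc]; noncomm_ring
        rw [e, psi_neg, ← psi_cons, hQ _, neg_zero]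
      rcases Nat.eq_zero_or_pos b with rfl | hb
      · obtain rfl : n = a := by omega
        obtain ⟨c, hQc⟩ := exists_mulLeft hQ
        have e : P * Q - Q * P = P * μ c - μ c * P := by rw [hQc]
        rw [e, ← psi_cons, hP _]
      obtain ⟨a', rfl⟩ : ∃ a', a = a' + 1 := ⟨a - 1, by omega⟩
      obtain ⟨b', rfl⟩ : ∃ b', b = b' + 1 := ⟨b - 1, by omega⟩
      obtain rfl : n = (a' + 1 + b') + 1 := by omega
      set x := g 0 with hx
      rw [← Fin.cons_self_tail g, psi_cons]
      have jac : (P * Q - Q * P) * μ x - μ x * (P * Q - Q * P)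
          = ((P * μ x - μ x * P) * Q - Q * (P * μ x - μ x * P))
            + (P * (Q * μ x - μ x * Q) - (Q * μ x - μ x * Q) * P) := by
        simp only [mul_sub, sub_mul, mul_neg, neg_mul, mul_add, add_mul, mul_assoc]; abel
      rw [jac, psi_add]
      rw [ih a' (b' + 1) (a' + 1 + b') (P * μ x - μ x * P) Q (by omega) (by omega)
        (psi_ord_hered hP x) hQ (Fin.tail g)]
      rw [ih (a' + 1) b' (a' + 1 + b') P (Q * μ x - μ x * Q) (by omega) (by omega)
        hP (psi_ord_hered hQ x) (Fin.tail g)]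
      rw [add_zero]


section Trace

variable (str : Module.End ℂ V →ₗ[ℂ] ℂ)
variable (hstr : ∀ P Q : Module.End ℂ V, str (P ∘ₗ Q) = str (Q ∘ₗ P))

include hstr

lemma str_mul_comm (S T : Module.End ℂ V) : str (S * T) = str (T * S) := by
  simpa only [Module.End.mul_eq_comp] using hstr S T

lemma str_comm_mul (f y : V) (R : Module.End ℂ V) :
    str (μ f * (R * μ y - μ y * R)) = 0 := by
  have hfy : μ f * μ y = μ (f * y) := by
    rw [LinearMap.mulLeft_mul, Module.End.mul_eq_comp]
  have hyf : μ y * μ f = μ (y * f) := by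
    rw [LinearMap.mulLeft_mul, Module.End.mul_eq_comp]
  have e1 : μ f * (R * μ y - μ y * R)
      = (μ f * R) * μ y - (μ f * μ y) * R := by
    simp only [mul_sub, sub_mul, mul_neg, neg_mul, mul_add, add_mul, mul_assoc]
  have e2 : μ y * (μ f * R) = (μ y * μ f) * R := by noncomm_ring
  rw [e1, map_sub, str_mul_comm str hstr (μ f * R) (μ y), e2, hfy, hyf, mul_comm f y, sub_self]

lemma str_mul_psi_succ (D : Module.End ℂ V) (n : ℕ) (h : Fin (n + 1) → V) (f : V) :
    str (μ f * psi D (n + 1) h) = 0 := by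
  rw [psi_succ]
  exact str_comm_mul str hstr _ _ _

/-- level-`a` trace vanishing from order `a` (via commutation with multiplications). -/
lemma str_top (P : Module.End ℂ V) (n : ℕ)
    (hord : ∀ h : Fin (n + 2) → V, psi P (n + 2) h = 0) :
    ∀ (f : V) (h : Fin (n + 1) → V), str (μ (f * psi P (n + 1) h 1)) = 0 := by
  intro f h
  have hcomm : ∀ x : V, psi P (n + 1) h * μ x = μ x * psi P (n + 1) h := by
    intro x
    have := hord (Fin.snoc h x)
    rw [psi_snoc] at this
    exact sub_eq_zero.mp this
  have hmu : μ (psi P (n + 1) h 1) = psi P (n + 1) h := (eq_mulLeft_of_comm hcomm).symm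
  rw [LinearMap.mulLeft_mul, ← Module.End.mul_eq_comp, hmu]
  exact str_mul_psi_succ str hstr P n h f

omit hstr in
lemma hered2 {P : Module.End ℂ V} {a : ℕ}
    (hP2 : ∀ (f : V) (h : Fin (a + 1) → V), str (μ (f * psi P (a + 1) h 1)) = 0) (x : V) :
    ∀ (f : V) (h : Fin a → V), str (μ (f * psi (P * μ x - μ x * P) a h 1)) = 0 := by
  intro f h
  rw [← psi_cons]
  exact hP2 f _

omit hstr in
lemma hered3 {P : Module.End ℂ V} {a' : ℕ}
    (hP2 : ∀ (f : V) (h : Fin (a' + 1) → V), str (μ (f * psi P (a' + 1) h 1)) = 0)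
    (hP3 : ∀ (f : V) (h : Fin (a' + 1 - 1) → V), str (μ (f * psi P (a' + 1 - 1) h 1)) = 0)
    (x : V) :
    ∀ (f : V) (h : Fin (a' - 1) → V),
      str (μ (f * psi (P * μ x - μ x * P) (a' - 1) h 1)) = 0 := by
  intro f h
  match a' with
  | 0 =>
      rw [← psi_cons]
      exact hP2 f _
  | e + 1 =>
      rw [← psi_cons]
      exact hP3 f _

omit hstr in
lemma mulLeft_sub' (x y : V) : μ (x - y) = μ x - μ y := by ext z; simp [sub_mul]

/-- Base case: `P` of order `0`. -/
lemma master_base (b : ℕ) (P Q : Module.End ℂ V)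
    (hP1 : ∀ h : Fin 1 → V, psi P 1 h = 0)
    (hQ1 : ∀ h : Fin (b + 1) → V, psi Q (b + 1) h = 0)
    (hQ2 : ∀ (f : V) (h : Fin b → V), str (μ (f * psi Q b h 1)) = 0)
    (hQ3 : ∀ (f : V) (h : Fin (b - 1) → V), str (μ (f * psi Q (b - 1) h 1)) = 0) :
    ∀ (f : V) (g : Fin (b - 2) → V),
      str (μ (f * psi (P * Q - Q * P) (b - 2) g 1)) = 0 := by
  intro f g
  obtain ⟨c, hPc⟩ := exists_mulLeft hP1
  have e : P * Q - Q * P = -(Q * μ c - μ c * Q) := by rw [hPc]; noncomm_ring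
  rw [e, psi_neg, ← psi_cons, LinearMap.neg_apply, mul_neg, mulLeft_neg', map_neg,
    neg_eq_zero]
  match b with
  | 0 => rw [hQ1]; simp [mulLeft_zero']
  | 1 => exact hQ2 f _
  | b'' + 2 => exact hQ3 f _

/-- Master lemma: trace compatibility of the commutator. -/
lemma master :
    ∀ (N a b n : ℕ) (P Q : Module.End ℂ V), a + b ≤ N → a + b = n →
      (∀ h : Fin (a + 1) → V, psi P (a + 1) h = 0) →
      (∀ (f : V) (h : Fin a → V), str (μ (f * psi P a h 1)) = 0) →
      (∀ (f : V) (h : Fin (a - 1) → V), str (μ (f * psi P (a - 1) h 1)) = 0) →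
      (∀ h : Fin (b + 1) → V, psi Q (b + 1) h = 0) →
      (∀ (f : V) (h : Fin b → V), str (μ (f * psi Q b h 1)) = 0) →
      (∀ (f : V) (h : Fin (b - 1) → V), str (μ (f * psi Q (b - 1) h 1)) = 0) →
      ∀ (f : V) (g : Fin (n - 2) → V),
        str (μ (f * psi (P * Q - Q * P) (n - 2) g 1)) = 0 := by
  intro N
  induction N with
  | zero =>
      intro a b n P Q hab hn hP1 hP2 hP3 hQ1 hQ2 hQ3 f g
      obtain ⟨rfl, rfl⟩ : a = 0 ∧ b = 0 := by omega
      obtain rfl : n = 0 := by omega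
      exact master_base str hstr 0 P Q hP1 hQ1 hQ2 hQ3 f g
  | succ N ih =>
      intro a b n P Q hab hn hP1 hP2 hP3 hQ1 hQ2 hQ3 f g
      rcases Nat.eq_zero_or_pos a with rfl | ha
      · have hn2 : n - 2 = b - 2 := by omega
        revert g; rw [hn2]; intro g
        exact master_base str hstr b P Q hP1 hQ1 hQ2 hQ3 f g
      rcases Nat.eq_zero_or_pos b with rfl | hb
      · have hn2 : n - 2 = a - 2 := by omega
        revert g; rw [hn2]; intro g
        have e : P * Q - Q * P = -(Q * P - P * Q) := by noncomm_ring
        rw [e, psi_neg, LinearMap.neg_apply, mul_neg, mulLeft_neg', map_neg, neg_eq_zero]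
        exact master_base str hstr a Q P hQ1 hP1 hP2 hP3 f g
      -- both a, b ≥ 1
      obtain ⟨a', rfl⟩ : ∃ a', a = a' + 1 := ⟨a - 1, by omega⟩
      obtain ⟨b', rfl⟩ : ∃ b', b = b' + 1 := ⟨b - 1, by omega⟩
      rcases Nat.eq_zero_or_pos (a' + b') with h0 | hstep
      · -- the (1,1) case
        obtain ⟨rfl, rfl⟩ : a' = 0 ∧ b' = 0 := by omega
        have hn2 : n - 2 = 0 := by omega
        revert g; rw [hn2]; intro g
        have h : Fin 0 → V := Fin.elim0
        have pe : ∀ x : V, P x = psi P 1 (Fin.snoc h x) 1 + x * P 1 :=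
          fun x => psi_apply P 0 h x
        have qe : ∀ x : V, Q x = psi Q 1 (Fin.snoc h x) 1 + x * Q 1 :=
          fun x => psi_apply Q 0 h x
        have e : f * (psi (P * Q - Q * P) 0 g) 1
            = f * (psi P 1 (Fin.snoc h (Q 1))) 1 - f * (psi Q 1 (Fin.snoc h (P 1))) 1 := by
          show f * ((P * Q - Q * P) 1) = _
          rw [LinearMap.sub_apply, Module.End.mul_apply, Module.End.mul_apply,
            pe (Q 1), qe (P 1)]
          ring
        rw [e, mulLeft_sub', map_sub, hP2 f _, hQ2 f _, sub_self]
      -- genuine induction step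
      obtain ⟨m, hm⟩ : ∃ m, n = m + 3 := ⟨n - 3, by omega⟩
      have hn2 : n - 2 = m + 1 := by omega
      revert g; rw [hn2]; intro g
      set x := g 0 with hx
      have jac : (P * Q - Q * P) * μ x - μ x * (P * Q - Q * P)
          = ((P * μ x - μ x * P) * Q - Q * (P * μ x - μ x * P))
            + (P * (Q * μ x - μ x * Q) - (Q * μ x - μ x * Q) * P) := by
        simp only [mul_sub, sub_mul, mul_neg, neg_mul, mul_add, add_mul, mul_assoc]; abel
      have hrw : psi (P * Q - Q * P) (m + 1) g
          = psi ((P * μ x - μ x * P) * Q - Q * (P * μ x - μ x * P)) m (Fin.tail g)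
            + psi (P * (Q * μ x - μ x * Q) - (Q * μ x - μ x * Q) * P) m (Fin.tail g) := by
        conv_lhs => rw [← Fin.cons_self_tail g]
        rw [psi_cons, ← hx, jac, psi_add]
      rw [hrw, LinearMap.add_apply, mul_add, mulLeft_add', map_add]
      have t1 := ih a' (b' + 1) (m + 2) (P * μ x - μ x * P) Q (by omega) (by omega)
        (psi_ord_hered hP1 x) (hered2 str hP2 x) (hered3 str hP2 hP3 x)
        hQ1 hQ2 hQ3 f (Fin.tail g)
      have t2 := ih (a' + 1) b' (m + 2) P (Q * μ x - μ x * Q) (by omega) (by omega)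
        hP1 hP2 hP3 (psi_ord_hered hQ1 x) (hered2 str hQ2 x) (hered3 str hQ2 hQ3 x)
        f (Fin.tail g)
      have t1' : str (μ (f * (psi ((P * μ x - μ x * P) * Q - Q * (P * μ x - μ x * P)) m
          (Fin.tail g)) 1)) = 0 := t1
      have t2' : str (μ (f * (psi (P * (Q * μ x - μ x * Q) - (Q * μ x - μ x * Q) * P) m
          (Fin.tail g)) 1)) = 0 := t2
      rw [t1', t2', add_zero]

omit hstr in
lemma good3 (D : V → V) (m : ℕ)
    (hSC : ∀ h : Fin (m + 2) → V, str (μ (koszul D (m + 2) h)) = 0)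
    (hTop : ∀ (f : V) (h : Fin (m + 3) → V), str (μ (f * koszul D (m + 3) h)) = 0) :
    ∀ (f : V) (h : Fin (m + 2) → V), str (μ (f * koszul D (m + 2) h)) = 0 := by
  -- the auxiliary symmetric function
  set u : V → (Fin m → V) → V → V → ℂ := fun x c b1 b2 =>
    str (μ (x * koszul D (m + 2) (Fin.snoc (Fin.snoc c b1) b2))) with hu
  have sym : ∀ x c b1 b2, u x c b1 b2 = u x c b2 b1 := by
    intro x c b1 b2
    simp only [hu]
    rw [koszul_swap_last2]
  have anti : ∀ x c b1 b2, u x c b1 b2 = -u b2 c b1 x := by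
    intro x c b1 b2
    have h3 : koszul D (m + 3) (Fin.snoc (Fin.snoc (Fin.snoc c b1) b2) x)
        = koszul D (m + 2) (Fin.snoc (Fin.snoc c b1) (b2 * x))
          - koszul D (m + 2) (Fin.snoc (Fin.snoc c b1) b2) * x
          - b2 * koszul D (m + 2) (Fin.snoc (Fin.snoc c b1) x) :=
      koszul_dsnoc D (m + 1) (Fin.snoc c b1) b2 x
    have e := congrArg (fun t => str (μ t)) h3
    simp only [mulLeft_sub', map_sub] at e
    have l0 : str (μ (koszul D (m + 3) (Fin.snoc (Fin.snoc (Fin.snoc c b1) b2) x))) = 0 := by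
      simpa using hTop 1 (Fin.snoc (Fin.snoc (Fin.snoc c b1) b2) x)
    have l1 : str (μ (koszul D (m + 2) (Fin.snoc (Fin.snoc c b1) (b2 * x)))) = 0 := hSC _
    rw [l0, l1] at e
    simp only [hu]
    rw [mul_comm x (koszul D (m + 2) (Fin.snoc (Fin.snoc c b1) b2))]
    linear_combination e
  have uzero : ∀ x c b1 b2, u x c b1 b2 = 0 := by
    intro x c b1 b2
    have h1 : u x c b1 b2 = -u x c b1 b2 := by
      calc u x c b1 b2 = -u b2 c b1 x := anti x c b1 b2
        _ = -u b2 c x b1 := by rw [sym b2 c b1 x]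
        _ = u b1 c x b2 := by rw [anti b2 c x b1, neg_neg]
        _ = u b1 c b2 x := by rw [sym b1 c x b2]
        _ = -u x c b2 b1 := anti b1 c b2 x
        _ = -u x c b1 b2 := by rw [sym x c b2 b1]
    have h2 : (2 : ℂ) * u x c b1 b2 = 0 := by linear_combination h1
    exact (mul_eq_zero.mp h2).resolve_left two_ne_zero
  intro f h
  have hrep : Fin.snoc (Fin.snoc (Fin.init (Fin.init h)) (Fin.init h (Fin.last m)))
      (h (Fin.last (m + 1))) = h := by
    rw [Fin.snoc_init_self, Fin.snoc_init_self]
  rw [← hrep]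
  exact uzero f (Fin.init (Fin.init h)) (Fin.init h (Fin.last m)) (h (Fin.last (m + 1)))

end Trace

/-- A finite-order operator (in this convention) kills `1`. -/
lemma apply_one_eq_zero (D : V → V) (n : ℕ)
    (h : ∀ f : Fin (n + 1) → V, koszul D (n + 1) f = 0) : D 1 = 0 := by
  have h0 := h (fun _ => 1)
  rw [koszul_const_one] at h0
  have h1 := congrArg (fun t => ((-1 : ℤ) ^ n) • t) h0
  simp only [smul_smul, ← pow_add, smul_zero] at h1
  rwa [Even.neg_one_pow ⟨n, rfl⟩, one_smul] at h1

lemma koszul_ord_succ (D : V → V) (n : ℕ)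
    (h1 : ∀ f : Fin (n + 1) → V, koszul D (n + 1) f = 0) :
    ∀ f : Fin (n + 2) → V, koszul D (n + 2) f = 0 := by
  intro f
  rw [koszul, h1, h1, h1]
  ring

lemma psi_ord_of_koszul (D : Module.End ℂ V) (hD : D 1 = 0) (n : ℕ)
    (h1 : ∀ f : Fin (n + 1) → V, koszul (⇑D) (n + 1) f = 0) :
    ∀ h : Fin (n + 1) → V, psi D (n + 1) h = 0 := by
  have h2 := koszul_ord_succ (⇑D) n h1
  intro h
  ext x
  rw [LinearMap.zero_apply, psi_apply D (n + 1) h x,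
    ← koszul_eq_psi D hD (n + 1) (Fin.snoc h x), ← koszul_eq_psi D hD n h, h1, h2]
  ring

end KoszulAux

open KoszulAux


/-- If `A` and `B` are differential operators of orders at most `k ≥ 3` and
`l ≥ 3` respectively, both strongly compatible with the trace, then
`str(f · ⟨f₁,…,f_{k+l−2}⟩_{k+l−2}^{[A,B]} · (−)) = 0` for all `f, f₁,…,f_{k+l−2}`;
in particular the commutator `[A,B]`, a differential operator of order at most
`k+l−1`, is strongly compatible with the trace. -/
theorem commutator_stronglyCompatible {V : Type*} [CommRing V] [Algebra ℂ V]
    (str : Module.End ℂ V →ₗ[ℂ] ℂ)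
    (hstr : ∀ P Q : Module.End ℂ V, str (P ∘ₗ Q) = str (Q ∘ₗ P))
    (k l : ℕ) (hk : 3 ≤ k) (hl : 3 ≤ l)
    (A B : V →ₗ[ℂ] V)
    (hA : IsDiffOpOfOrderAtMost (⇑A) k) (hAc : StronglyCompatibleWithTrace str (⇑A) k)
    (hB : IsDiffOpOfOrderAtMost (⇑B) l) (hBc : StronglyCompatibleWithTrace str (⇑B) l) :
    (∀ (f : V) (g : Fin (k + l - 2) → V),
        str (LinearMap.mulLeft ℂ (f * koszul (⇑(A ∘ₗ B - B ∘ₗ A)) (k + l - 2) g)) = 0)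
      ∧ IsDiffOpOfOrderAtMost (⇑(A ∘ₗ B - B ∘ₗ A)) (k + l - 1)
      ∧ StronglyCompatibleWithTrace str (⇑(A ∘ₗ B - B ∘ₗ A)) (k + l - 1) := by
  obtain ⟨m, rfl⟩ : ∃ m, k = m + 3 := ⟨k - 3, by omega⟩
  obtain ⟨p, rfl⟩ : ∃ p, l = p + 3 := ⟨l - 3, by omega⟩
  have hA1 : A 1 = 0 := apply_one_eq_zero (⇑A) (m + 3) hA
  have hB1 : B 1 = 0 := apply_one_eq_zero (⇑B) (p + 3) hB
  have hAB1 : (A ∘ₗ B - B ∘ₗ A) 1 = 0 := by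
    simp [LinearMap.sub_apply, LinearMap.comp_apply, hA1, hB1, map_zero]
  have hApsi : ∀ h : Fin (m + 4) → V, psi A (m + 4) h = 0 :=
    psi_ord_of_koszul A hA1 (m + 3) hA
  have hBpsi : ∀ h : Fin (p + 4) → V, psi B (p + 4) h = 0 :=
    psi_ord_of_koszul B hB1 (p + 3) hB
  have goodA2 : ∀ (f : V) (h : Fin (m + 3) → V),
      str (LinearMap.mulLeft ℂ (f * psi A (m + 3) h 1)) = 0 :=
    str_top str hstr A (m + 2) hApsi
  have goodB2 : ∀ (f : V) (h : Fin (p + 3) → V),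
      str (LinearMap.mulLeft ℂ (f * psi B (p + 3) h 1)) = 0 :=
    str_top str hstr B (p + 2) hBpsi
  have goodA2k : ∀ (f : V) (h : Fin (m + 3) → V),
      str (LinearMap.mulLeft ℂ (f * koszul (⇑A) (m + 3) h)) = 0 := by
    intro f h
    rw [koszul_eq_psi A hA1 (m + 2) h]
    exact goodA2 f h
  have goodB2k : ∀ (f : V) (h : Fin (p + 3) → V),
      str (LinearMap.mulLeft ℂ (f * koszul (⇑B) (p + 3) h)) = 0 := by
    intro f h
    rw [koszul_eq_psi B hB1 (p + 2) h]
    exact goodB2 f h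
  have hSCA : ∀ h : Fin (m + 2) → V,
      str (LinearMap.mulLeft ℂ (koszul (⇑A) (m + 2) h)) = 0 := fun h => hAc h
  have hSCB : ∀ h : Fin (p + 2) → V,
      str (LinearMap.mulLeft ℂ (koszul (⇑B) (p + 2) h)) = 0 := fun h => hBc h
  have goodA3k := good3 str (⇑A) m hSCA goodA2k
  have goodB3k := good3 str (⇑B) p hSCB goodB2k
  have goodA3 : ∀ (f : V) (h : Fin (m + 2) → V),
      str (LinearMap.mulLeft ℂ (f * psi A (m + 2) h 1)) = 0 := by
    intro f h
    rw [← koszul_eq_psi A hA1 (m + 1) h]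
    exact goodA3k f h
  have goodB3 : ∀ (f : V) (h : Fin (p + 2) → V),
      str (LinearMap.mulLeft ℂ (f * psi B (p + 2) h 1)) = 0 := by
    intro f h
    rw [← koszul_eq_psi B hB1 (p + 1) h]
    exact goodB3k f h
  have partA : ∀ (f : V) (g : Fin (m + 3 + (p + 3) - 2) → V),
      str (LinearMap.mulLeft ℂ (f * psi (A * B - B * A) (m + 3 + (p + 3) - 2) g 1)) = 0 := by
    intro f g
    exact master str hstr (m + 3 + (p + 3)) (m + 3) (p + 3) (m + 3 + (p + 3)) A B le_rfl rfl
      hApsi goodA2 goodA3 hBpsi goodB2 goodB3 f g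
  refine ⟨?_, ?_, ?_⟩
  · intro f g
    show str (LinearMap.mulLeft ℂ
      (f * koszul (⇑(A ∘ₗ B - B ∘ₗ A)) (m + 3 + p + 1) g)) = 0
    rw [koszul_eq_psi (A ∘ₗ B - B ∘ₗ A) hAB1 (m + 3 + p) g]
    exact partA f g
  · show ∀ f : Fin (m + 3 + p + 2 + 1) → V,
      koszul (⇑(A ∘ₗ B - B ∘ₗ A)) (m + 3 + p + 2 + 1) f = 0
    intro f
    rw [koszul_eq_psi (A ∘ₗ B - B ∘ₗ A) hAB1 (m + 3 + p + 2) f]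
    have h2 : psi (A ∘ₗ B - B ∘ₗ A) (m + 3 + p + 2 + 1) f = 0 :=
      psi_comm_zero (m + 3 + (p + 3)) (m + 3) (p + 3) (m + 3 + p + 2 + 1) A B le_rfl
        (by omega) hApsi hBpsi f
    rw [h2, LinearMap.zero_apply]
  · show ∀ f : Fin (m + 3 + p + 1) → V,
      str (LinearMap.mulLeft ℂ (koszul (⇑(A ∘ₗ B - B ∘ₗ A)) (m + 3 + p + 1) f)) = 0
    intro f
    rw [koszul_eq_psi (A ∘ₗ B - B ∘ₗ A) hAB1 (m + 3 + p) f]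
    have := partA 1 f
    rwa [one_mul] at this
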